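/- arXiv:math/9901023 — 5 statements merged into one kernel-verified Lean document; each statement's English description precedes it below -/
import Mathlib

section
/- Let U be a nonempty open connected subset of ℂ and let f_1, …, f_k : U → ℂ^n be holomorphic functions. For each c ∈ U let W_c be the ℂ-linear span in ℂ^n of the set of all iterated derivatives f_i^{(l)}(c) for i = 1, …, k and l ≥ 0 (including l = 0). Then W_c = W_{c'} for all c, c' ∈ U. -/
open Set Metric

/-- If a holomorphic scalar function on a nonempty open connected set has all iterated
derivatives vanishing at one point, they vanish at every point. -/
lemma aux_all_derivs_zero {U : Set ℂ} (hU : IsOpen U) (hUconn : IsConnected U)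
    {g : ℂ → ℂ} (hg : DifferentiableOn ℂ g U) {c' : ℂ} (hc' : c' ∈ U)
    (h0 : ∀ l : ℕ, iteratedDerivWithin l g U c' = 0) :
    ∀ c ∈ U, ∀ l : ℕ, iteratedDerivWithin l g U c = 0 := by
  have hderiv : ∀ l : ℕ, iteratedDeriv l g c' = 0 := by
    intro l
    have := h0 l
    rw [iteratedDerivWithin_eq_iteratedFDerivWithin,
      iteratedFDerivWithin_of_isOpen l hU hc'] at this
    rw [iteratedDeriv_eq_iteratedFDeriv]
    exact this
  obtain ⟨r, hr, hball⟩ := (Metric.isOpen_iff.mp hU) c' hc'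
  have hgzero : EqOn g 0 U := by
    have hA : AnalyticOnNhd ℂ g U := hg.analyticOnNhd hU
    apply hA.eqOn_zero_of_preconnected_of_eventuallyEq_zero hUconn.isPreconnected hc'
    have : ∀ z ∈ ball c' r, g z = 0 := by
      intro z hz
      rw [← Complex.taylorSeries_eq_on_ball (hg.mono hball) hz]
      simp [hderiv]
    filter_upwards [Metric.ball_mem_nhds c' hr] with z hz using this z hz
  intro c hc l
  have := iteratedDerivWithin_congr hgzero (n := l) hc
  rw [this]
  rw [iteratedDerivWithin_eq_iteratedFDerivWithin]
  rw [show (0 : ℂ → ℂ) = (fun _ => (0:ℂ)) from rfl]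
  rw [iteratedFDerivWithin_zero_fun]
  simp

lemma aux_span_le {n k : ℕ}
    (U : Set ℂ) (hU : IsOpen U) (hUconn : IsConnected U)
    (f : Fin k → ℂ → (Fin n → ℂ))
    (hf : ∀ i, DifferentiableOn ℂ (f i) U)
    {c c' : ℂ} (hc : c ∈ U) (hc' : c' ∈ U) :
    Submodule.span ℂ {v | ∃ (i : Fin k) (l : ℕ), v = iteratedDerivWithin l (f i) U c} ≤
    Submodule.span ℂ {v | ∃ (i : Fin k) (l : ℕ), v = iteratedDerivWithin l (f i) U c'} := by
  set S' : Submodule ℂ (Fin n → ℂ) :=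
    Submodule.span ℂ {v | ∃ (i : Fin k) (l : ℕ), v = iteratedDerivWithin l (f i) U c'}
  rw [Submodule.span_le]
  rintro v ⟨i, l, rfl⟩
  by_contra hv
  obtain ⟨φ, hφv, hφS⟩ := S'.exists_dual_map_eq_bot_of_notMem hv inferInstance
  have hφ0 : ∀ x ∈ S', φ x = 0 := by
    intro x hx
    have : φ x ∈ S'.map φ := Submodule.mem_map_of_mem hx
    rwa [hφS, Submodule.mem_bot] at this
  set φL : (Fin n → ℂ) →L[ℂ] ℂ := LinearMap.toContinuousLinearMap φ
  set g : ℂ → ℂ := fun z => φ (f i z) with hg_def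
  have hgdiff : DifferentiableOn ℂ g U := φL.differentiable.comp_differentiableOn (hf i)
  have hcd : ContDiffOn ℂ ⊤ (f i) U := ((hf i).analyticOnNhd hU).contDiffOn hU.uniqueDiffOn
  have hkey : ∀ x ∈ U, ∀ m : ℕ,
      iteratedDerivWithin m g U x = φ (iteratedDerivWithin m (f i) U x) := by
    intro x hx m
    have hcomp := φL.iteratedFDerivWithin_comp_left (f := f i) (hcd x hx) hU.uniqueDiffOn hx
      (i := m) le_top
    rw [iteratedDerivWithin_eq_iteratedFDerivWithin, iteratedDerivWithin_eq_iteratedFDerivWithin]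
    have : g = φL ∘ f i := rfl
    rw [this, hcomp]
    rfl
  have hzero : ∀ m : ℕ, iteratedDerivWithin m g U c' = 0 := by
    intro m
    rw [hkey c' hc' m]
    exact hφ0 _ (Submodule.subset_span ⟨i, m, rfl⟩)
  have := aux_all_derivs_zero hU hUconn hgdiff hc' hzero c hc l
  rw [hkey c hc l] at this
  exact hφv this

/-- For holomorphic functions `f 1, …, f k : U → ℂ^n` on a nonempty open
connected `U ⊆ ℂ`, the span `W c` of all iterated derivatives of the `f i` at `c`
is the same for all `c ∈ U`. -/
theorem frenet_span_of_derivatives_constant {n k : ℕ}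
    (U : Set ℂ) (hU : IsOpen U) (hUconn : IsConnected U)
    (f : Fin k → ℂ → (Fin n → ℂ))
    (hf : ∀ i, DifferentiableOn ℂ (f i) U)
    (W : ℂ → Submodule ℂ (Fin n → ℂ))
    (hW : ∀ c, W c =
      Submodule.span ℂ {v | ∃ (i : Fin k) (l : ℕ), v = iteratedDerivWithin l (f i) U c}) :
    ∀ c ∈ U, ∀ c' ∈ U, W c = W c' := by
  intro c hc c' hc'
  rw [hW c, hW c']
  exact le_antisymm (aux_span_le U hU hUconn f hf hc hc')
    (aux_span_le U hU hUconn f hf hc' hc)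
end

section
/- Let U be a nonempty open connected subset of ℂ, let f_1, …, f_k : U → ℂ^n be holomorphic functions such that f_1(c), …, f_k(c) are linearly independent for every c ∈ U, and let g : U → ℂ^n be a holomorphic function such that g(c) lies in the ℂ-span of f_1(c), …, f_k(c) for every c ∈ U (equivalently, f_1 ∧ ⋯ ∧ f_k ∧ g ≡ 0 on U). Then there exist unique holomorphic functions b^1, …, b^k : U → ℂ such that g = Σ_{α=1}^k f_α · b^α on U. -/
open Matrix

lemma det_diffAt {m : ℕ} {M : ℂ → Matrix (Fin m) (Fin m) ℂ} {c : ℂ}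
    (h : ∀ i j, DifferentiableAt ℂ (fun z => M z i j) c) :
    DifferentiableAt ℂ (fun z => (M z).det) c := by
  simp only [Matrix.det_apply']
  exact DifferentiableAt.fun_sum fun σ _ =>
    (differentiableAt_const _).mul (DifferentiableAt.fun_finsetProd fun i _ => h _ _)

lemma exists_det_ne_zero {n k : ℕ} (v : Fin k → Fin n → ℂ)
    (hv : LinearIndependent ℂ v) :
    ∃ s : Fin k → Fin n, (Matrix.of fun β α => v α (s β)).det ≠ 0 := by
  classical
  set M : Matrix (Fin k) (Fin n) ℂ := Matrix.of v with hM
  have hrank : M.rank = k := by simpa using hv.rank_matrix (M := M)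
  have hspan : Submodule.span ℂ (Set.range Mᵀ) = ⊤ := by
    apply Submodule.eq_top_of_finrank_eq
    rw [show Set.range Mᵀ = Set.range (Matrix.col M) from rfl, ← Matrix.rank_eq_finrank_span_cols, hrank]
    simp [Module.finrank_fintype_fun_eq_card]
  obtain ⟨t, hts, htspan, htli⟩ := exists_linearIndependent ℂ (Set.range Mᵀ)
  rw [hspan] at htspan
  have bas : Module.Basis t ℂ (Fin k → ℂ) :=
    Module.Basis.mk htli (by rw [Subtype.range_coe_subtype, Set.setOf_mem_eq, htspan])
  haveI : Fintype t := FiniteDimensional.fintypeBasisIndex bas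
  have hcard : Fintype.card t = k := by
    have := Module.finrank_eq_card_basis bas
    simpa [Module.finrank_fintype_fun_eq_card] using this.symm
  let e : Fin k ≃ t := (Fintype.equivFinOfCardEq hcard).symm
  have hsel : ∀ β : Fin k, ∃ j : Fin n, Mᵀ j = (e β : Fin k → ℂ) := fun β => hts (e β).2
  choose s hs using hsel
  refine ⟨s, ?_⟩
  have hrows : LinearIndependent ℂ (fun β : Fin k => ((Matrix.of fun β α => v α (s β)) β)) := by
    have : (fun β : Fin k => ((Matrix.of fun β α => v α (s β)) β)) =
        fun β => ((e β : Fin k → ℂ)) := by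
      funext β; rw [← hs β]; rfl
    rw [this]
    exact htli.comp e e.injective
  have : IsUnit (Matrix.of fun β α => v α (s β)) :=
    Matrix.linearIndependent_rows_iff_isUnit.mp hrows
  exact isUnit_iff_ne_zero.mp ((Matrix.isUnit_iff_isUnit_det _).mp this)

/-- Proposition 5 of the paper: If `f 1, …, f k : U → ℂ^n` are
holomorphic and pointwise linearly independent everywhere on the nonempty open
connected set `U`, and the holomorphic function `g : U → ℂ^n` takes values in the
pointwise span of the `f α`, then `g = Σ α, b α • f α` for unique holomorphic
functions `b α : U → ℂ`. -/
theorem holomorphic_coefficients_exist_unique {n k : ℕ}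
    (U : Set ℂ) (hU : IsOpen U) (hUconn : IsConnected U)
    (f : Fin k → ℂ → (Fin n → ℂ)) (hf : ∀ α, DifferentiableOn ℂ (f α) U)
    (hli : ∀ c ∈ U, LinearIndependent ℂ (fun α => f α c))
    (g : ℂ → (Fin n → ℂ)) (hg : DifferentiableOn ℂ g U)
    (hspan : ∀ c ∈ U, g c ∈ Submodule.span ℂ (Set.range fun α => f α c)) :
    ∃ b : Fin k → ℂ → ℂ,
      ((∀ α, DifferentiableOn ℂ (b α) U) ∧
        ∀ z ∈ U, g z = ∑ α, b α z • f α z) ∧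
      ∀ b' : Fin k → ℂ → ℂ,
        ((∀ α, DifferentiableOn ℂ (b' α) U) ∧
          ∀ z ∈ U, g z = ∑ α, b' α z • f α z) →
        ∀ α, ∀ z ∈ U, b' α z = b α z := by
  classical
  have hrep : ∀ z, z ∈ U → ∃ cv : Fin k → ℂ, ∑ α, cv α • f α z = g z := by
    intro z hz
    exact (Submodule.mem_span_range_iff_exists_fun ℂ).mp (hspan z hz)
  choose! cvec hcvec using hrep
  set b : Fin k → ℂ → ℂ := fun α z => cvec z α with hb
  -- pointwise uniqueness of coefficients
  have huniq : ∀ z ∈ U, ∀ c1 c2 : Fin k → ℂ,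
      (∑ α, c1 α • f α z) = (∑ α, c2 α • f α z) → c1 = c2 := by
    intro z hz c1 c2 h
    have hzero : ∑ α, (c1 - c2) α • f α z = 0 := by
      simp only [Pi.sub_apply, sub_smul, Finset.sum_sub_distrib, h, sub_self]
    have := Fintype.linearIndependent_iff.mp (hli z hz) (c1 - c2) hzero
    funext α
    have := this α
    simpa [sub_eq_zero] using this
  -- sum formula
  have hsum : ∀ z ∈ U, g z = ∑ α, b α z • f α z := fun z hz => (hcvec z hz).symm
  refine ⟨b, ⟨?_, hsum⟩, ?_⟩
  · -- differentiability
    intro α c hc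
    obtain ⟨s, hdet⟩ := exists_det_ne_zero (fun α => f α c) (hli c hc)
    set A : ℂ → Matrix (Fin k) (Fin k) ℂ := fun z => Matrix.of fun β α => f α z (s β) with hA
    have hAdiff : ∀ z ∈ U, ∀ i j, DifferentiableAt ℂ (fun w => A w i j) z := by
      intro z hz i j
      have := (hf j).differentiableAt (hU.mem_nhds hz)
      exact differentiableAt_pi.mp this (s i)
    have hdetdiff : ∀ z ∈ U, DifferentiableAt ℂ (fun w => (A w).det) z :=
      fun z hz => det_diffAt (fun i j => hAdiff z hz i j)
    set V : Set ℂ := U ∩ {z | (A z).det ≠ 0} with hV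
    have hVopen : IsOpen V := by
      rw [isOpen_iff_mem_nhds]
      intro z hz
      exact Filter.inter_mem (hU.mem_nhds hz.1)
        ((hdetdiff z hz.1).continuousAt.eventually_ne hz.2)
    have hcV : c ∈ V := ⟨hc, hdet⟩
    have hgdiff : ∀ z ∈ U, ∀ β : Fin k, DifferentiableAt ℂ (fun w => g w (s β)) z := by
      intro z hz β
      exact differentiableAt_pi.mp (hg.differentiableAt (hU.mem_nhds hz)) (s β)
    -- the explicit formula on V
    have hformula : ∀ z ∈ V, b α z = ((A z).det)⁻¹ * ((A z).cramer (fun β => g z (s β))) α := by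
      rintro z ⟨hzU, hdz⟩
      have hunit : IsUnit (A z) := (Matrix.isUnit_iff_isUnit_det _).mpr (isUnit_iff_ne_zero.mpr hdz)
      have hmul : (A z) *ᵥ (fun α => b α z) = fun β => g z (s β) := by
        funext β
        have := congrFun (hsum z hzU) (s β)
        simp only [Finset.sum_apply, Pi.smul_apply, smul_eq_mul] at this
        simp only [Matrix.mulVec, dotProduct, hA, Matrix.of_apply]
        rw [this]
        exact Finset.sum_congr rfl fun i _ => mul_comm _ _
      set y : Fin k → ℂ := ((A z).det)⁻¹ • (A z).cramer (fun β => g z (s β)) with hy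
      have hmul2 : (A z) *ᵥ y = fun β => g z (s β) := by
        rw [hy, Matrix.mulVec_smul, Matrix.mulVec_cramer, smul_smul,
          inv_mul_cancel₀ hdz, one_smul]
      have heq : (fun α => b α z) = y := by
        have hinj := Matrix.mulVec_injective_iff_isUnit.mpr hunit
        exact hinj (hmul.trans hmul2.symm)
      have := congrFun heq α
      simpa [hy, Pi.smul_apply, smul_eq_mul] using this
    have hdiffh : DifferentiableAt ℂ
        (fun z => ((A z).det)⁻¹ * ((A z).cramer (fun β => g z (s β))) α) c := by
      apply DifferentiableAt.mul
      · exact (hdetdiff c hc).inv hdet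
      · have hrw : (fun z => ((A z).cramer (fun β => g z (s β))) α)
            = fun z => ((A z).updateCol α (fun β => g z (s β))).det := by
          funext z; rw [Matrix.cramer_apply]
        rw [hrw]
        apply det_diffAt
        intro i j
        by_cases hj : j = α
        · simp only [Matrix.updateCol_apply, hj, if_true]
          exact hgdiff c hc i
        · simp only [Matrix.updateCol_apply, hj, if_false]
          exact hAdiff c hc i j
    have hev : b α =ᶠ[nhds c] fun z => ((A z).det)⁻¹ * ((A z).cramer (fun β => g z (s β))) α :=
      Filter.eventuallyEq_of_mem (hVopen.mem_nhds hcV) hformula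
    exact (hev.differentiableAt_iff.mpr hdiffh).differentiableWithinAt
  · rintro b' ⟨_, hb'sum⟩ α z hz
    have := huniq z hz (fun α => b' α z) (fun α => b α z)
      (((hb'sum z hz).symm).trans (hsum z hz))
    exact congrFun this α
end

section
/- Let U be a nonempty open connected subset of ℂ and let {f_1, …, f_k} be holomorphic functions U → ℂ^n of rank l ≤ k. Suppose {g_1, …, g_l} and {g'_1, …, g'_l} are two families of holomorphic functions U → ℂ^n, each pointwise linearly independent at every c ∈ U, such that f_α = Σ_{β=1}^l g_β · d^β_α and f_α = Σ_{β=1}^l g'_β · d'^β_α on U for some holomorphic functions d^β_α, d'^β_α : U → ℂ. Then there exist holomorphic functions c^β_α : U → ℂ (α, β = 1, …, l) such that g'_α = Σ_{β=1}^l g_β · c^β_α on U for each α = 1, …, l. -/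
open Filter Topology Matrix

section CRFRHelpers

private lemma crfr_detDiff {m : ℕ} {U : Set ℂ} (M : ℂ → Matrix (Fin m) (Fin m) ℂ)
    (h : ∀ i j, DifferentiableOn ℂ (fun z => M z i j) U) :
    DifferentiableOn ℂ (fun z => (M z).det) U := by
  simp only [Matrix.det_apply']
  apply DifferentiableOn.fun_sum
  intro σ _
  exact ((DifferentiableOn.fun_finset_prod (fun i _ => h (σ i) i))).const_mul _

private lemma crfr_adjDiff {m : ℕ} {U : Set ℂ} (M : ℂ → Matrix (Fin m) (Fin m) ℂ)
    (h : ∀ i j, DifferentiableOn ℂ (fun z => M z i j) U) (i j : Fin m) :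
    DifferentiableOn ℂ (fun z => (M z).adjugate i j) U := by
  simp only [Matrix.adjugate_apply]
  apply crfr_detDiff
  intro a b
  by_cases hab : a = j
  · simp only [Matrix.updateRow_apply, hab, if_true]
    exact differentiableOn_const _
  · simp only [Matrix.updateRow_apply, hab, if_false]
    exact h a b

private lemma crfr_analyticAt_dslope {f : ℂ → ℂ} {p : ℂ} (h : AnalyticAt ℂ f p) :
    AnalyticAt ℂ (dslope f p) p := by
  obtain ⟨q, hq⟩ := h
  exact ⟨q.fslope, hq.has_fpower_series_dslope_fslope⟩

private lemma crfr_eq_at_of_punctured {E : Type*} [TopologicalSpace E] [T2Space E]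
    {f g : ℂ → E} {p : ℂ}
    (hf : ContinuousAt f p) (hg : ContinuousAt g p) (h : ∀ᶠ z in 𝓝[≠] p, f z = g z) :
    f p = g p := by
  have h1 : Filter.Tendsto f (𝓝[≠] p) (𝓝 (f p)) := hf.continuousWithinAt
  have h2 : Filter.Tendsto f (𝓝[≠] p) (𝓝 (g p)) :=
    (hg.continuousWithinAt : Filter.Tendsto g _ _).congr' (Filter.EventuallyEq.symm h)
  exact tendsto_nhds_unique h1 h2

private lemma crfr_key_sum {l n : ℕ} (M N : Matrix (Fin l) (Fin l) ℂ)
    (v : Fin l → Fin n → ℂ) (α : Fin l) :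
    ∑ j, N j α • (∑ i, M i j • v i) = ∑ i, (M * N) i α • v i := by
  simp_rw [Finset.smul_sum, smul_smul, Matrix.mul_apply, Finset.sum_smul]
  rw [Finset.sum_comm]
  refine Finset.sum_congr rfl fun i _ => Finset.sum_congr rfl fun j _ => ?_
  rw [mul_comm]

private lemma crfr_exists_cols {n k l : ℕ} (v : Fin l → Fin n → ℂ)
    (hv : LinearIndependent ℂ v) (col : Fin k → Fin l → ℂ)
    (hrank : Module.finrank ℂ (Submodule.span ℂ
      (Set.range fun α => ∑ β, col α β • v β)) = l) :
    ∃ S : Fin l → Fin k, (Matrix.of fun β j => col (S j) β).det ≠ 0 := by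
  classical
  set T : (Fin l → ℂ) →ₗ[ℂ] (Fin n → ℂ) := Fintype.linearCombination ℂ v with hT
  have hinj : Function.Injective T := by
    rw [injective_iff_map_eq_zero]
    intro x hx
    funext β
    refine Fintype.linearIndependent_iff.1 hv x ?_ β
    simpa [hT, Fintype.linearCombination_apply] using hx
  have hcomp : (fun α => ∑ β, col α β • v β) = T ∘ col := by
    funext α
    simp [hT, Fintype.linearCombination_apply]
  rw [hcomp, Set.range_comp, Submodule.span_image] at hrank
  have hspan : Module.finrank ℂ (Submodule.span ℂ (Set.range col)) = l := by
    rw [(Submodule.equivMapOfInjective T hinj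
      (Submodule.span ℂ (Set.range col))).finrank_eq]
    exact hrank
  have htop : Submodule.span ℂ (Set.range col) = ⊤ :=
    Submodule.eq_top_of_finrank_eq (by simp [hspan])
  obtain ⟨s, hs_sub, hs_span, hs_li⟩ := exists_linearIndependent ℂ (Set.range col)
  rw [htop] at hs_span
  have hs_fin : s.Finite := hs_li.setFinite
  haveI := hs_fin.fintype
  have hcards : Fintype.card s = l := by
    have h1 := finrank_span_set_eq_card hs_li
    rw [hs_span, finrank_top] at h1
    simpa [Set.toFinset_card] using h1.symm
  let e : Fin l ≃ s := (Fintype.equivFinOfCardEq hcards).symm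
  have hch : ∀ j : Fin l, ∃ i : Fin k, col i = (e j : Fin l → ℂ) := fun j => hs_sub (e j).2
  choose S hS using hch
  have hli : LinearIndependent ℂ (fun j => col (S j)) := by
    have heq : (fun j => col (S j)) = (fun x : s => (x : Fin l → ℂ)) ∘ e := funext fun j => hS j
    rw [heq]
    exact hs_li.comp e e.injective
  refine ⟨S, fun hdet => ?_⟩
  obtain ⟨w, hw0, hww⟩ := Matrix.exists_mulVec_eq_zero_iff.2 hdet
  have hzero : ∑ j, w j • col (S j) = 0 := by
    funext β
    have := congrFun hww β
    simpa [Matrix.mulVec, dotProduct, mul_comm, Finset.sum_apply] using this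
  exact hw0 (funext fun j => Fintype.linearIndependent_iff.1 hli w hzero j)

end CRFRHelpers

/-- Proposition 6 of the paper, uniqueness part: If the holomorphic
functions `f 1, …, f k : U → ℂ^n` have rank `l ≤ k` and `g`, `g'` are two families
of `l` holomorphic `ℂ^n`-valued functions, each pointwise linearly independent at
every point of `U`, through which the `f α` factor with holomorphic coefficients,
then `g'` factors through `g` with holomorphic coefficients. -/
theorem constant_rank_factorization_related {n k l : ℕ} (hlk : l ≤ k)
    (U : Set ℂ) (hU : IsOpen U) (hUconn : IsConnected U)
    (f : Fin k → ℂ → (Fin n → ℂ)) (hf : ∀ i, DifferentiableOn ℂ (f i) U)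
    (hle : ∀ c ∈ U,
      Module.finrank ℂ (Submodule.span ℂ (Set.range fun i => f i c)) ≤ l)
    (hmax : ∃ c ∈ U,
      Module.finrank ℂ (Submodule.span ℂ (Set.range fun i => f i c)) = l)
    (g g' : Fin l → ℂ → (Fin n → ℂ))
    (hg : ∀ β, DifferentiableOn ℂ (g β) U)
    (hg' : ∀ β, DifferentiableOn ℂ (g' β) U)
    (hgli : ∀ c ∈ U, LinearIndependent ℂ (fun β => g β c))
    (hg'li : ∀ c ∈ U, LinearIndependent ℂ (fun β => g' β c))
    (d d' : Fin l → Fin k → ℂ → ℂ)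
    (hd : ∀ α β, DifferentiableOn ℂ (d β α) U)
    (hd' : ∀ α β, DifferentiableOn ℂ (d' β α) U)
    (hfd : ∀ α, ∀ z ∈ U, f α z = ∑ β, d β α z • g β z)
    (hfd' : ∀ α, ∀ z ∈ U, f α z = ∑ β, d' β α z • g' β z) :
    ∃ C : Fin l → Fin l → ℂ → ℂ,
      (∀ α β, DifferentiableOn ℂ (C β α) U) ∧
      (∀ α, ∀ z ∈ U, g' α z = ∑ β, C β α z • g β z) := by
  classical
  obtain ⟨c₀, hc₀U, hc₀⟩ := hmax
  obtain ⟨S, hSdet⟩ := crfr_exists_cols (fun β => g' β c₀) (hg'li c₀ hc₀U)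
    (fun α β => d' β α c₀) (by
      have he : (fun α => ∑ β, d' β α c₀ • g' β c₀) = fun i => f i c₀ :=
        funext fun α => (hfd' α c₀ hc₀U).symm
      rw [he]
      exact hc₀)
  set A : ℂ → Matrix (Fin l) (Fin l) ℂ := fun z => Matrix.of fun β j => d' β (S j) z with hA
  set B : ℂ → Matrix (Fin l) (Fin l) ℂ := fun z => Matrix.of fun β j => d β (S j) z with hB
  set δ : ℂ → ℂ := fun z => (A z).det with hδ
  set H : Fin l → Fin l → ℂ → ℂ := fun β α z => (B z * (A z).adjugate) β α with hH
  have hAapp : ∀ (i j : Fin l) (z : ℂ), A z i j = d' i (S j) z := fun i j z => by rw [hA]; rfl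
  have hBapp : ∀ (i j : Fin l) (z : ℂ), B z i j = d i (S j) z := fun i j z => by rw [hB]; rfl
  have hδapp : ∀ z, δ z = (A z).det := fun z => by rw [hδ]
  have hHapp : ∀ β α z, H β α z = (B z * (A z).adjugate) β α := fun β α z => by rw [hH]
  have hδc₀ : δ c₀ ≠ 0 := by
    rw [hδapp, hA]
    exact hSdet
  have hAd : ∀ i j, DifferentiableOn ℂ (fun z => A z i j) U := by
    intro i j
    simp only [hAapp]
    exact hd' (S j) i
  have hδd : DifferentiableOn ℂ δ U := by
    rw [hδ]
    exact crfr_detDiff A hAd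
  have hHd : ∀ β α, DifferentiableOn ℂ (H β α) U := by
    intro β α
    have heq : H β α = fun z => ∑ j, d β (S j) z * (A z).adjugate j α := by
      funext z
      simp [hHapp, hBapp, Matrix.mul_apply]
    rw [heq]
    apply DifferentiableOn.fun_sum
    intro j _
    exact (hd (S j) β).mul (crfr_adjDiff A hAd j α)
  have hE1 : ∀ α, ∀ z ∈ U, δ z • g' α z = ∑ β, H β α z • g β z := by
    intro α z hz
    have w1 : ∑ j, (A z).adjugate j α • f (S j) z
        = ∑ i, (A z * (A z).adjugate) i α • g' i z := by
      rw [← crfr_key_sum]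
      refine Finset.sum_congr rfl fun j _ => ?_
      rw [hfd' (S j) z hz]
      congr 1
    have w2 : ∑ j, (A z).adjugate j α • f (S j) z
        = ∑ i, (B z * (A z).adjugate) i α • g i z := by
      rw [← crfr_key_sum]
      refine Finset.sum_congr rfl fun j _ => ?_
      rw [hfd (S j) z hz]
      congr 1
    have w3 : ∑ i, (A z * (A z).adjugate) i α • g' i z = δ z • g' α z := by
      rw [Matrix.mul_adjugate]
      rw [Finset.sum_eq_single α]
      · simp [Matrix.smul_apply, Matrix.one_apply, hδapp]
      · intro i _ hi
        simp [Matrix.smul_apply, Matrix.one_apply, hi]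
      · intro h
        exact absurd (Finset.mem_univ α) h
    simp only [hHapp]
    rw [← w3, ← w1, w2]
  have hδAn : ∀ p ∈ U, AnalyticAt ℂ δ p := fun p hp => hδd.analyticAt (hU.mem_nhds hp)
  have hδpune : ∀ p ∈ U, ∀ᶠ z in 𝓝[≠] p, δ z ≠ 0 := by
    intro p hp
    rcases (hδAn p hp).eventually_eq_zero_or_eventually_ne_zero with h0 | h1
    · exact absurd ((hδd.analyticOnNhd hU).eqOn_zero_of_preconnected_of_eventuallyEq_zero
        hUconn.isPreconnected hp h0 hc₀U) hδc₀
    · exact h1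
  have hδnet : ∀ p ∈ U, ¬ (∀ᶠ z in 𝓝 p, δ z = 0) := by
    intro p hp hev
    obtain ⟨z, h1, h2⟩ := ((hev.filter_mono nhdsWithin_le_nhds).and (hδpune p hp)).exists
    exact h2 h1
  have hloc : ∀ p ∈ U, ∀ α, ∃ c : Fin l → ℂ → ℂ, (∀ β, AnalyticAt ℂ (c β) p) ∧
      (∀ᶠ z in 𝓝 p, ∀ β, H β α z = δ z * c β z) := by
    intro p hp α
    obtain ⟨m, u, hu_an, hu0, hδeq⟩ :=
      ((hδAn p hp).exists_eventuallyEq_pow_smul_nonzero_iff).2 (hδnet p hp)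
    have hgc : ∀ β, ContinuousAt (g β) p :=
      fun β => ((hg β).differentiableAt (hU.mem_nhds hp)).continuousAt
    have hg'c : ContinuousAt (g' α) p :=
      ((hg' α).differentiableAt (hU.mem_nhds hp)).continuousAt
    have key : ∀ j : ℕ, j ≤ m → ∃ w : Fin l → ℂ → ℂ, (∀ β, AnalyticAt ℂ (w β) p) ∧
        (∀ᶠ z in 𝓝 p, ∀ β, H β α z = (z - p) ^ j * w β z) := by
      intro j hj
      induction j with
      | zero =>
        exact ⟨fun β => H β α, fun β => (hHd β α).analyticAt (hU.mem_nhds hp),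
          Filter.Eventually.of_forall fun z β => by simp⟩
      | succ i ih =>
        obtain ⟨w, hw_an, hw_eq⟩ := ih (le_trans (Nat.le_succ i) hj)
        have him : i < m := lt_of_lt_of_le (Nat.lt_succ_self i) hj
        have hpun : ∀ᶠ z in 𝓝[≠] p, (∑ β, w β z • g β z)
            = ((z - p) ^ (m - i) * u z) • g' α z := by
          filter_upwards [hw_eq.filter_mono nhdsWithin_le_nhds,
            hδeq.filter_mono nhdsWithin_le_nhds,
            (hU.eventually_mem hp).filter_mono nhdsWithin_le_nhds,
            self_mem_nhdsWithin] with z h1 h2 h3 hzp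
          have hzp' : (z : ℂ) ≠ p := hzp
          have hcancel : ((z - p) ^ i : ℂ) ≠ 0 := pow_ne_zero _ (sub_ne_zero.mpr hzp')
          apply smul_right_injective (Fin n → ℂ) hcancel
          show ((z - p) ^ i : ℂ) • (∑ β, w β z • g β z)
              = ((z - p) ^ i : ℂ) • (((z - p) ^ (m - i) * u z) • g' α z)
          have lhs : ((z - p) ^ i : ℂ) • (∑ β, w β z • g β z) = δ z • g' α z := by
            rw [hE1 α z h3, Finset.smul_sum]
            refine Finset.sum_congr rfl fun β _ => ?_
            rw [smul_smul, h1 β]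
          have rhs : ((z - p) ^ i : ℂ) • (((z - p) ^ (m - i) * u z) • g' α z)
              = δ z • g' α z := by
            rw [smul_smul, h2, smul_eq_mul]
            congr 1
            rw [← mul_assoc, ← pow_add]
            have hmi : i + (m - i) = m := Nat.add_sub_cancel' (le_of_lt him)
            rw [hmi]
          rw [lhs, rhs]
        have hzero : ∑ β, w β p • g β p = 0 := by
          have hT1 : Filter.Tendsto (fun z => ∑ β, w β z • g β z) (𝓝[≠] p)
              (𝓝 (∑ β, w β p • g β p)) := by
            apply Filter.Tendsto.mono_left ?_ nhdsWithin_le_nhds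
            exact tendsto_finset_sum _ fun β _ => ((hw_an β).continuousAt.smul (hgc β))
          have hT2 : Filter.Tendsto (fun z => ((z - p) ^ (m - i) * u z) • g' α z) (𝓝 p)
              (𝓝 ((((p : ℂ) - p) ^ (m - i) * u p) • g' α p)) :=
            ((((continuous_id.sub continuous_const).pow _).continuousAt).mul
              hu_an.continuousAt).smul hg'c
          have hval : (((p : ℂ) - p) ^ (m - i) * u p) • g' α p = 0 := by
            rw [sub_self, zero_pow (Nat.sub_ne_zero_of_lt him), zero_mul, zero_smul]
          have hT2' : Filter.Tendsto (fun z => ∑ β, w β z • g β z) (𝓝[≠] p) (𝓝 0) := by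
            rw [← hval]
            exact (hT2.mono_left nhdsWithin_le_nhds).congr'
              (Filter.EventuallyEq.symm hpun)
          exact tendsto_nhds_unique hT1 hT2'
        have hwp0 : ∀ β, w β p = 0 :=
          Fintype.linearIndependent_iff.1 (hgli p hp) _ hzero
        refine ⟨fun β => dslope (w β) p, fun β => crfr_analyticAt_dslope (hw_an β), ?_⟩
        filter_upwards [hw_eq] with z h1 β
        have hds : (z - p) * dslope (w β) p z = w β z := by
          have h2 := sub_smul_dslope (w β) p z
          rw [hwp0 β, sub_zero] at h2
          simpa [smul_eq_mul] using h2
        rw [h1 β, ← hds]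
        ring
    obtain ⟨w, hw_an, hw_eq⟩ := key m le_rfl
    refine ⟨fun β z => w β z / u z, fun β => (hw_an β).div hu_an hu0, ?_⟩
    filter_upwards [hw_eq, hδeq, hu_an.continuousAt.eventually_ne hu0] with z h1 h2 h3 β
    show H β α z = δ z * (w β z / u z)
    rw [h1 β, h2, smul_eq_mul]
    field_simp
  set C : Fin l → Fin l → ℂ → ℂ :=
    fun β α z => limUnder (𝓝[≠] z) (fun t => H β α t / δ t) with hC
  have hmain : ∀ p ∈ U, ∀ α, (∀ β, DifferentiableAt ℂ (C β α) p) ∧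
      (g' α p = ∑ β, C β α p • g β p) := by
    intro p hp α
    obtain ⟨c, hc_an, hc_eq⟩ := hloc p hp α
    have hgc : ∀ β, ContinuousAt (g β) p :=
      fun β => ((hg β).differentiableAt (hU.mem_nhds hp)).continuousAt
    have hg'c : ContinuousAt (g' α) p :=
      ((hg' α).differentiableAt (hU.mem_nhds hp)).continuousAt
    have hCc : ∀ᶠ z in 𝓝 p, ∀ β, C β α z = c β z := by
      have hev3 : ∀ᶠ z in 𝓝 p, ∀ β, AnalyticAt ℂ (c β) z :=
        eventually_all.2 fun β => (hc_an β).eventually_analyticAt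
      filter_upwards [hU.eventually_mem hp, hc_eq.eventually_nhds, hev3] with z hzU hz1 hz2 β
      have ht : Filter.Tendsto (fun t => H β α t / δ t) (𝓝[≠] z) (𝓝 (c β z)) := by
        have hcont : Filter.Tendsto (c β) (𝓝[≠] z) (𝓝 (c β z)) :=
          (hz2 β).continuousAt.continuousWithinAt
        refine hcont.congr' ?_
        filter_upwards [hz1.filter_mono nhdsWithin_le_nhds, hδpune z hzU] with t h1 h2
        rw [h1 β, mul_div_cancel_left₀ _ h2]
      exact ht.limUnder_eq
    constructor
    · intro β
      have h1 : C β α =ᶠ[𝓝 p] c β := by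
        filter_upwards [hCc] with z h
        exact h β
      exact (Filter.EventuallyEq.differentiableAt_iff h1).2 (hc_an β).differentiableAt
    · have hsc : ContinuousAt (fun z => ∑ β, c β z • g β z) p :=
        tendsto_finset_sum _ fun β _ => ((hc_an β).continuousAt.smul (hgc β))
      have hpt : g' α p = ∑ β, c β p • g β p := by
        refine crfr_eq_at_of_punctured hg'c hsc ?_
        filter_upwards [hδpune p hp, hc_eq.filter_mono nhdsWithin_le_nhds,
          (hU.eventually_mem hp).filter_mono nhdsWithin_le_nhds] with z h1 h2 h3
        have he2 : δ z • g' α z = δ z • ∑ β, c β z • g β z := by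
          rw [hE1 α z h3, Finset.smul_sum]
          refine Finset.sum_congr rfl fun β _ => ?_
          rw [h2 β, smul_smul]
        exact smul_right_injective (Fin n → ℂ) h1 he2
      rw [hpt]
      refine Finset.sum_congr rfl fun β _ => ?_
      rw [hCc.self_of_nhds β]
  exact ⟨C, fun α β z hz => ((hmain z hz α).1 β).differentiableWithinAt,
    fun α z hz => (hmain z hz α).2⟩
end

section
/- Let U be a nonempty open connected subset of ℂ and k_0, …, k_t positive integers. Let ξ_a : U → Mat(n, k_a; ℂ), a = 0, …, t, be holomorphic functions and B_{ba} : U → Mat(k_b, k_a; ℂ) holomorphic functions (0 ≤ b ≤ a+1 ≤ t+1, with B_{t+1,t} ≡ 0) such that ∂_− ξ_a = Σ_{b=0}^{a+1} ξ_b B_{ba} on U for each a. Assume that for each a = 0, …, t−1 there exists a point c ∈ U at which the matrix B_{a+1,a}(c) has rank k_{a+1}. If a row vector w ∈ Mat(1, n; ℂ) satisfies w ξ_0(c) = 0 for every c ∈ U, then w ξ_a(c) = 0 for every a = 0, …, t and every c ∈ U. -/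
open Matrix

/-- The Wirtinger derivative `∂₋ F = ∂F/∂z = ½(∂ₓ - i ∂_y)F` of a matrix-valued
function on `ℂ`, taken entrywise. -/
noncomputable def wdMinus {N K : ℕ} (F : ℂ → Matrix (Fin N) (Fin K) ℂ) (c : ℂ) :
    Matrix (Fin N) (Fin K) ℂ :=
  Matrix.of fun i j =>
    (1 / 2 : ℂ) *
      (fderiv ℝ (fun z => F z i j) c 1 - Complex.I * fderiv ℝ (fun z => F z i j) c Complex.I)

open scoped ComplexOrder in
/-- A matrix with full row rank times its conjugate transpose has unit determinant. -/
lemma aux_rank_unit {k' K : ℕ} (M : Matrix (Fin k') (Fin K) ℂ) (h : M.rank = k') :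
    IsUnit (M * Mᴴ).det := by
  have hG : (M * Mᴴ).rank = k' := by rw [Matrix.rank_self_mul_conjTranspose, h]
  have htop : LinearMap.range (M * Mᴴ).mulVecLin = ⊤ := by
    apply Submodule.eq_top_of_finrank_eq
    rw [show Module.finrank ℂ (LinearMap.range (M * Mᴴ).mulVecLin) = (M * Mᴴ).rank from rfl, hG]
    simp [Module.finrank_pi]
  have hsurj : Function.Surjective (M * Mᴴ).mulVec := by
    intro y
    obtain ⟨x, hx⟩ := (LinearMap.range_eq_top.mp htop) y
    exact ⟨x, hx⟩
  exact (Matrix.isUnit_iff_isUnit_det _).mp (Matrix.mulVec_surjective_iff_isUnit.mp hsurj)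

/-- A row vector annihilated by a matrix with unit determinant is zero. -/
lemma aux_kill {k' : ℕ} (G : Matrix (Fin k') (Fin k') ℂ) (hG : IsUnit G.det)
    (v : Matrix (Fin 1) (Fin k') ℂ) (hv : v * G = 0) : v = 0 := by
  calc v = v * (G * G⁻¹) := by rw [Matrix.mul_nonsing_inv _ hG, Matrix.mul_one]
  _ = (v * G) * G⁻¹ := by rw [Matrix.mul_assoc]
  _ = 0 := by rw [hv, Matrix.zero_mul]

/-- If `w * ξ` vanishes on an open set, then `w * ∂₋ξ` vanishes there as well. -/
lemma aux_wd_kill {n K : ℕ} {U : Set ℂ} (hU : IsOpen U) (ξ : ℂ → Matrix (Fin n) (Fin K) ℂ)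
    (hdiff : ∀ i j, DifferentiableOn ℂ (fun z => ξ z i j) U)
    (w : Matrix (Fin 1) (Fin n) ℂ) (hw : ∀ c ∈ U, w * ξ c = 0) {c : ℂ} (hc : c ∈ U) :
    w * wdMinus ξ c = 0 := by
  have key : ∀ j : Fin K, ∀ v : ℂ,
      ∑ i, w 0 i * (fderiv ℝ (fun z => ξ z i j) c v) = 0 := by
    intro j v
    have hdi : ∀ i : Fin n, DifferentiableAt ℝ (fun z => ξ z i j) c := fun i =>
      ((hdiff i j).differentiableAt (hU.mem_nhds hc)).restrictScalars ℝ
    have h1 : fderiv ℝ (fun z => ∑ i, w 0 i * ξ z i j) c = 0 := by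
      have hev : (fun z => ∑ i, w 0 i * ξ z i j) =ᶠ[nhds c] fun _ => 0 := by
        filter_upwards [hU.mem_nhds hc] with z hz
        have h := congrFun (congrFun (hw z hz) 0) j
        simpa [Matrix.mul_apply] using h
      rw [hev.fderiv_eq]
      exact fderiv_const_apply 0
    have h2 : fderiv ℝ (fun z => ∑ i, w 0 i * ξ z i j) c
        = ∑ i, w 0 i • fderiv ℝ (fun z => ξ z i j) c := by
      rw [fderiv_fun_sum (fun i _ => ((hdi i).const_mul (w 0 i)))]
      exact Finset.sum_congr rfl fun i _ => fderiv_const_mul (hdi i) (w 0 i)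
    have h3 : (∑ i, w 0 i • fderiv ℝ (fun z => ξ z i j) c) v = 0 := by
      rw [← h2, h1]; rfl
    simpa [ContinuousLinearMap.sum_apply, ContinuousLinearMap.smul_apply, smul_eq_mul] using h3
  ext p j
  obtain rfl : p = 0 := Subsingleton.elim p 0
  simp only [Matrix.mul_apply, wdMinus, Matrix.of_apply, Matrix.zero_apply]
  have expand : ∑ i, w 0 i * ((1 / 2 : ℂ) *
        (fderiv ℝ (fun z => ξ z i j) c 1 - Complex.I * fderiv ℝ (fun z => ξ z i j) c Complex.I))
      = (1 / 2 : ℂ) * (∑ i, w 0 i * fderiv ℝ (fun z => ξ z i j) c 1)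
        - (1 / 2 : ℂ) * Complex.I * (∑ i, w 0 i * fderiv ℝ (fun z => ξ z i j) c Complex.I) := by
    rw [Finset.mul_sum, Finset.mul_sum, ← Finset.sum_sub_distrib]
    exact Finset.sum_congr rfl fun i _ => by ring
  rw [expand, key j 1, key j Complex.I]
  ring

/-- Proposition 8 of the paper, key step: If the holomorphic
`ξ a : U → Mat(n, k a; ℂ)` satisfy `∂₋ ξ a = Σ_{b ≤ a+1} ξ b • B b a` with `B (a+1) a`
of rank `k (a+1)` at some point of the nonempty open connected set `U`, then a row
vector `w` annihilating `ξ 0` on `U` annihilates every `ξ a` on `U`. -/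
theorem annihilator_of_osculating_flag {n t : ℕ}
    (U : Set ℂ) (hU : IsOpen U) (hUconn : IsConnected U)
    (k : ℕ → ℕ) (hk : ∀ a, a ≤ t → 0 < k a)
    (ξ : (a : ℕ) → ℂ → Matrix (Fin n) (Fin (k a)) ℂ)
    (B : (b : ℕ) → (a : ℕ) → ℂ → Matrix (Fin (k b)) (Fin (k a)) ℂ)
    (hξhol : ∀ a, a ≤ t → ∀ i j, DifferentiableOn ℂ (fun z => ξ a z i j) U)
    (hBhol : ∀ a, a ≤ t → ∀ b, b ≤ a + 1 → ∀ i j,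
      DifferentiableOn ℂ (fun z => B b a z i j) U)
    (hBtop : ∀ c : ℂ, B (t + 1) t c = 0)
    (hξder : ∀ a, a ≤ t → ∀ c ∈ U,
      wdMinus (ξ a) c = ∑ b ∈ Finset.range (a + 2), ξ b c * B b a c)
    (hBrank : ∀ a, a < t → ∃ c ∈ U, (B (a + 1) a c).rank = k (a + 1))
    (w : Matrix (Fin 1) (Fin n) ℂ)
    (hw : ∀ c ∈ U, w * ξ 0 c = 0) :
    ∀ a, a ≤ t → ∀ c ∈ U, w * ξ a c = 0 := by
  intro a
  induction a using Nat.strong_induction_on with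
  | _ a IH =>
    match a with
    | 0 => exact fun _ => hw
    | a + 1 =>
      intro ha
      have hat : a < t := by omega
      -- Step 1: w * ξ (a+1) * B (a+1) a = 0 on U
      have step1 : ∀ z ∈ U, (w * ξ (a + 1) z) * B (a + 1) a z = 0 := by
        intro z hz
        have h0 : w * wdMinus (ξ a) z = 0 :=
          aux_wd_kill hU (ξ a) (hξhol a (by omega)) w
            (fun c hc => IH a (by omega) (by omega) c hc) hz
        have h2 : w * (∑ b ∈ Finset.range (a + 2), ξ b z * B b a z) = 0 := by
          rw [← hξder a (by omega) z hz]; exact h0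
        rw [Matrix.mul_sum, Finset.sum_range_succ] at h2
        have hzero : ∑ b ∈ Finset.range (a + 1), w * (ξ b z * B b a z) = 0 := by
          apply Finset.sum_eq_zero
          intro b hb
          have hb' : b < a + 1 := Finset.mem_range.mp hb
          rw [← Matrix.mul_assoc, IH b (by omega) (by omega) z hz, Matrix.zero_mul]
        rw [hzero, zero_add, ← Matrix.mul_assoc] at h2
        exact h2
      -- Step 2: near the full rank point, w * ξ (a+1) vanishes
      obtain ⟨c₀, hc₀U, hrank⟩ := hBrank a hat
      have hMc : ∀ i j, ContinuousAt (fun z => B (a + 1) a z i j) c₀ := fun i j =>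
        ((hBhol a (by omega) (a + 1) le_rfl i j).differentiableAt
          (hU.mem_nhds hc₀U)).continuousAt
      have hG : ContinuousAt (fun z => B (a + 1) a z * (B (a + 1) a z)ᴴ) c₀ := by
        apply continuousAt_pi.2
        intro i
        apply continuousAt_pi.2
        intro l
        simp only [Matrix.mul_apply, Matrix.conjTranspose_apply]
        exact tendsto_finset_sum _ fun j _ => (hMc i j).mul (hMc l j).star
      have hdetc : ContinuousAt (fun z => (B (a + 1) a z * (B (a + 1) a z)ᴴ).det) c₀ :=
        (continuous_id.matrix_det.continuousAt).comp hG
      have hdet0 : IsUnit (B (a + 1) a c₀ * (B (a + 1) a c₀)ᴴ).det :=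
        aux_rank_unit _ hrank
      have hev0 : (fun z => w * ξ (a + 1) z) =ᶠ[nhds c₀] fun _ => 0 := by
        filter_upwards [hU.mem_nhds hc₀U, hdetc.eventually_ne hdet0.ne_zero] with z hzU hdz
        have h1 : (w * ξ (a + 1) z) * (B (a + 1) a z * (B (a + 1) a z)ᴴ) = 0 := by
          rw [← Matrix.mul_assoc, step1 z hzU, Matrix.zero_mul]
        exact aux_kill _ (isUnit_iff_ne_zero.mpr hdz) _ h1
      -- Step 3: identity theorem propagates the vanishing over all of U
      intro c hc
      ext p j
      obtain rfl : p = 0 := Subsingleton.elim p 0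
      have entry_hol : AnalyticOnNhd ℂ (fun z => (w * ξ (a + 1) z) 0 j) U := by
        have hdsum : DifferentiableOn ℂ (fun z => ∑ i, w 0 i * ξ (a + 1) z i j) U :=
          DifferentiableOn.fun_sum fun i _ => (hξhol (a + 1) ha i j).const_mul (w 0 i)
        have heq : (fun z => (w * ξ (a + 1) z) 0 j)
            = fun z => ∑ i, w 0 i * ξ (a + 1) z i j := by
          funext z; simp [Matrix.mul_apply]
        rw [heq]
        exact hdsum.analyticOnNhd hU
      have hevj : (fun z => (w * ξ (a + 1) z) 0 j) =ᶠ[nhds c₀] 0 :=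
        hev0.mono fun z hz => by
          have := congrFun (congrFun hz 0) j
          simpa using this
      have := entry_hol.eqOn_zero_of_preconnected_of_eventuallyEq_zero
        hUconn.isPreconnected hc₀U hevj hc
      simpa using this
end

section
/- Let U be a nonempty open subset of ℂ, let k_0, …, k_t be positive integers with k_0 + ⋯ + k_t = n, and let φ_a : U → Mat(n, k_a; ℂ), a = 0, …, t, be twice continuously (real-)differentiable functions such that the n × n matrix φ(c) = (φ_0(c) ⋯ φ_t(c)) is invertible for every c ∈ U. Let β_a : U → Mat(k_a, ℂ) be smooth with β_a(c) invertible for every c ∈ U, let B_{a+1,a} : U → Mat(k_{a+1}, k_a; ℂ) be holomorphic (a = 0, …, t−1; B_{t+1,t} ≡ 0), and set D_{a-1,a} = −(B_{a,a-1})^† (D_{-1,0} ≡ 0). Suppose that on U one has ∂_− φ_a = φ_a β_a^{-1} (∂_− β_a) + φ_{a+1} B_{a+1,a} and ∂_+ φ_a = φ_{a-1} β_{a-1}^{-1} D_{a-1,a} β_a for every a = 0, …, t. Then each β_a satisfies the nonabelian Toda equation ∂_+(β_a^{-1} ∂_− β_a) = −β_a^{-1} D_{a,a+1} β_{a+1}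 B_{a+1,a} + B_{a,a-1} β_{a-1}^{-1} D_{a-1,a} β_a on U (terms with index −1 or t+1 being zero). -/
open Matrix

/-- The Wirtinger derivative `∂₊ F = ∂F/∂z̄ = ½(∂ₓ + i ∂_y)F` of a matrix-valued
function on `ℂ`, taken entrywise. -/
noncomputable def wdPlus {N K : ℕ} (F : ℂ → Matrix (Fin N) (Fin K) ℂ) (c : ℂ) :
    Matrix (Fin N) (Fin K) ℂ :=
  Matrix.of fun i j =>
    (1 / 2 : ℂ) *
      (fderiv ℝ (fun z => F z i j) c 1 + Complex.I * fderiv ℝ (fun z => F z i j) c Complex.I)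

noncomputable def wm (f : ℂ → ℂ) (c : ℂ) : ℂ :=
  (1 / 2 : ℂ) * (fderiv ℝ f c 1 - Complex.I * fderiv ℝ f c Complex.I)

noncomputable def wp (f : ℂ → ℂ) (c : ℂ) : ℂ :=
  (1 / 2 : ℂ) * (fderiv ℝ f c 1 + Complex.I * fderiv ℝ f c Complex.I)

lemma wm_congr {f g : ℂ → ℂ} {c : ℂ} (h : f =ᶠ[nhds c] g) : wm f c = wm g c := by
  unfold wm; rw [h.fderiv_eq]

lemma wp_congr {f g : ℂ → ℂ} {c : ℂ} (h : f =ᶠ[nhds c] g) : wp f c = wp g c := by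
  unfold wp; rw [h.fderiv_eq]

lemma wm_const (a c : ℂ) : wm (fun _ => a) c = 0 := by simp [wm]

lemma wp_const (a c : ℂ) : wp (fun _ => a) c = 0 := by simp [wp]

lemma wm_add {f g : ℂ → ℂ} {c : ℂ} (hf : DifferentiableAt ℝ f c)
    (hg : DifferentiableAt ℝ g c) : wm (fun z => f z + g z) c = wm f c + wm g c := by
  simp only [wm, fderiv_fun_add hf hg, ContinuousLinearMap.add_apply]; ring

lemma wp_add {f g : ℂ → ℂ} {c : ℂ} (hf : DifferentiableAt ℝ f c)
    (hg : DifferentiableAt ℝ g c) : wp (fun z => f z + g z) c = wp f c + wp g c := by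
  simp only [wp, fderiv_fun_add hf hg, ContinuousLinearMap.add_apply]; ring

lemma wm_mul {f g : ℂ → ℂ} {c : ℂ} (hf : DifferentiableAt ℝ f c)
    (hg : DifferentiableAt ℝ g c) :
    wm (fun z => f z * g z) c = wm f c * g c + f c * wm g c := by
  simp only [wm, fderiv_fun_mul hf hg, ContinuousLinearMap.add_apply,
    ContinuousLinearMap.smul_apply, smul_eq_mul]
  ring

lemma wp_mul {f g : ℂ → ℂ} {c : ℂ} (hf : DifferentiableAt ℝ f c)
    (hg : DifferentiableAt ℝ g c) :
    wp (fun z => f z * g z) c = wp f c * g c + f c * wp g c := by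
  simp only [wp, fderiv_fun_mul hf hg, ContinuousLinearMap.add_apply,
    ContinuousLinearMap.smul_apply, smul_eq_mul]
  ring

lemma wm_sum {ι : Type*} {s : Finset ι} {f : ι → ℂ → ℂ} {c : ℂ}
    (h : ∀ i ∈ s, DifferentiableAt ℝ (f i) c) :
    wm (fun z => ∑ i ∈ s, f i z) c = ∑ i ∈ s, wm (f i) c := by
  simp only [wm, fderiv_fun_sum h, ContinuousLinearMap.sum_apply]
  rw [Finset.mul_sum, ← Finset.sum_sub_distrib, Finset.mul_sum]

lemma wp_sum {ι : Type*} {s : Finset ι} {f : ι → ℂ → ℂ} {c : ℂ}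
    (h : ∀ i ∈ s, DifferentiableAt ℝ (f i) c) :
    wp (fun z => ∑ i ∈ s, f i z) c = ∑ i ∈ s, wp (f i) c := by
  simp only [wp, fderiv_fun_sum h, ContinuousLinearMap.sum_apply]
  rw [Finset.mul_sum, ← Finset.sum_add_distrib, Finset.mul_sum]

lemma wp_holo {f : ℂ → ℂ} {c : ℂ} (h : DifferentiableAt ℂ f c) : wp f c = 0 := by
  rw [wp, h.fderiv_restrictScalars ℝ]
  have h2 : (fderiv ℂ f c) Complex.I = Complex.I * (fderiv ℂ f c) 1 := by
    have := (fderiv ℂ f c).map_smul Complex.I (1 : ℂ)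
    simpa [smul_eq_mul] using this
  simp only [ContinuousLinearMap.coe_restrictScalars', h2]
  have : Complex.I * (Complex.I * (fderiv ℂ f c) 1) = -(fderiv ℂ f c) 1 := by
    rw [← mul_assoc, Complex.I_mul_I]; ring
  rw [this]; ring

lemma wp_wm_comm {f : ℂ → ℂ} {c : ℂ} (hf : ContDiffAt ℝ 2 f c) :
    wp (fun z => wm f z) c = wm (fun z => wp f z) c := by
  have hd : DifferentiableAt ℝ (fderiv ℝ f) c :=
    (hf.fderiv_right (m := 1) (by norm_num)).differentiableAt one_ne_zero
  have hdv : ∀ v : ℂ, DifferentiableAt ℝ (fun z => fderiv ℝ f z v) c :=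
    fun v => hd.clm_apply (differentiableAt_const v)
  have hform : ∀ v w : ℂ,
      fderiv ℝ (fun z => fderiv ℝ f z v) c w = fderiv ℝ (fderiv ℝ f) c w v := by
    intro v w
    rw [fderiv_clm_apply hd (differentiableAt_const v)]
    simp
  have hsymm : fderiv ℝ (fderiv ℝ f) c Complex.I 1 = fderiv ℝ (fderiv ℝ f) c 1 Complex.I :=
    hf.isSymmSndFDerivAt (by norm_num) Complex.I 1
  have dsub : ∀ w : ℂ,
      fderiv ℝ (fun z => (1/2 : ℂ) * (fderiv ℝ f z 1 - Complex.I * fderiv ℝ f z Complex.I)) c w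
        = (1/2 : ℂ) * (fderiv ℝ (fderiv ℝ f) c w 1
            - Complex.I * fderiv ℝ (fderiv ℝ f) c w Complex.I) := by
    intro w
    rw [fderiv_const_mul ((hdv 1).fun_sub ((hdv Complex.I).const_mul Complex.I)),
      ContinuousLinearMap.smul_apply]
    rw [fderiv_fun_sub (hdv 1) ((hdv Complex.I).const_mul Complex.I), ContinuousLinearMap.sub_apply]
    rw [fderiv_const_mul (hdv Complex.I), ContinuousLinearMap.smul_apply]
    rw [hform 1 w, hform Complex.I w]
    simp [smul_eq_mul]
  have dadd : ∀ w : ℂ,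
      fderiv ℝ (fun z => (1/2 : ℂ) * (fderiv ℝ f z 1 + Complex.I * fderiv ℝ f z Complex.I)) c w
        = (1/2 : ℂ) * (fderiv ℝ (fderiv ℝ f) c w 1
            + Complex.I * fderiv ℝ (fderiv ℝ f) c w Complex.I) := by
    intro w
    rw [fderiv_const_mul ((hdv 1).fun_add ((hdv Complex.I).const_mul Complex.I)),
      ContinuousLinearMap.smul_apply]
    rw [fderiv_fun_add (hdv 1) ((hdv Complex.I).const_mul Complex.I), ContinuousLinearMap.add_apply]
    rw [fderiv_const_mul (hdv Complex.I), ContinuousLinearMap.smul_apply]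
    rw [hform 1 w, hform Complex.I w]
    simp [smul_eq_mul]
  show (1/2 : ℂ) * (fderiv ℝ (fun z => wm f z) c 1 + Complex.I * fderiv ℝ (fun z => wm f z) c Complex.I)
      = (1/2 : ℂ) * (fderiv ℝ (fun z => wp f z) c 1 - Complex.I * fderiv ℝ (fun z => wp f z) c Complex.I)
  simp only [wm, wp, dsub, dadd]
  rw [hsymm]
  ring

lemma wdMinus_apply {N K : ℕ} (F : ℂ → Matrix (Fin N) (Fin K) ℂ) (c : ℂ) (i : Fin N) (j : Fin K) :
    wdMinus F c i j = wm (fun z => F z i j) c := rfl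

lemma wdPlus_apply {N K : ℕ} (F : ℂ → Matrix (Fin N) (Fin K) ℂ) (c : ℂ) (i : Fin N) (j : Fin K) :
    wdPlus F c i j = wp (fun z => F z i j) c := rfl



section MatrixLayer

variable {N M K : ℕ} {c : ℂ} {U : Set ℂ}

lemma wdMinus_congr {F G : ℂ → Matrix (Fin N) (Fin K) ℂ} (hU : IsOpen U) (hc : c ∈ U)
    (h : ∀ z ∈ U, F z = G z) : wdMinus F c = wdMinus G c := by
  ext i j
  rw [wdMinus_apply, wdMinus_apply]
  exact wm_congr (Filter.eventually_of_mem (hU.mem_nhds hc) fun z hz =>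
    (by rw [h z hz] : F z i j = G z i j))

lemma wdPlus_congr {F G : ℂ → Matrix (Fin N) (Fin K) ℂ} (hU : IsOpen U) (hc : c ∈ U)
    (h : ∀ z ∈ U, F z = G z) : wdPlus F c = wdPlus G c := by
  ext i j
  rw [wdPlus_apply, wdPlus_apply]
  exact wp_congr (Filter.eventually_of_mem (hU.mem_nhds hc) fun z hz =>
    (by rw [h z hz] : F z i j = G z i j))

lemma wdMinus_zero : wdMinus (fun _ => (0 : Matrix (Fin N) (Fin K) ℂ)) c = 0 := by
  ext i j
  rw [wdMinus_apply]
  simpa using wm_const 0 c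

lemma wdPlus_zero : wdPlus (fun _ => (0 : Matrix (Fin N) (Fin K) ℂ)) c = 0 := by
  ext i j
  rw [wdPlus_apply]
  simpa using wp_const 0 c

lemma wdMinus_add {F G : ℂ → Matrix (Fin N) (Fin K) ℂ}
    (hF : ∀ i j, DifferentiableAt ℝ (fun z => F z i j) c)
    (hG : ∀ i j, DifferentiableAt ℝ (fun z => G z i j) c) :
    wdMinus (fun z => F z + G z) c = wdMinus F c + wdMinus G c := by
  ext i j
  rw [Matrix.add_apply, wdMinus_apply, wdMinus_apply, wdMinus_apply]
  exact wm_add (hF i j) (hG i j)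

lemma wdPlus_add {F G : ℂ → Matrix (Fin N) (Fin K) ℂ}
    (hF : ∀ i j, DifferentiableAt ℝ (fun z => F z i j) c)
    (hG : ∀ i j, DifferentiableAt ℝ (fun z => G z i j) c) :
    wdPlus (fun z => F z + G z) c = wdPlus F c + wdPlus G c := by
  ext i j
  rw [Matrix.add_apply, wdPlus_apply, wdPlus_apply, wdPlus_apply]
  exact wp_add (hF i j) (hG i j)

lemma wdMinus_mul {F : ℂ → Matrix (Fin N) (Fin M) ℂ} {G : ℂ → Matrix (Fin M) (Fin K) ℂ}
    (hF : ∀ i j, DifferentiableAt ℝ (fun z => F z i j) c)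
    (hG : ∀ i j, DifferentiableAt ℝ (fun z => G z i j) c) :
    wdMinus (fun z => F z * G z) c = wdMinus F c * G c + F c * wdMinus G c := by
  ext i j
  rw [wdMinus_apply]
  have h1 : (fun z => (F z * G z) i j) = fun z => ∑ l, F z i l * G z l j := by
    funext z; exact Matrix.mul_apply
  rw [h1, wm_sum (fun l _ => (hF i l).fun_mul (hG l j))]
  simp only [Matrix.add_apply, Matrix.mul_apply, wdMinus_apply]
  rw [← Finset.sum_add_distrib]
  refine Finset.sum_congr rfl fun l _ => ?_
  rw [wm_mul (hF i l) (hG l j)]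

lemma wdPlus_mul {F : ℂ → Matrix (Fin N) (Fin M) ℂ} {G : ℂ → Matrix (Fin M) (Fin K) ℂ}
    (hF : ∀ i j, DifferentiableAt ℝ (fun z => F z i j) c)
    (hG : ∀ i j, DifferentiableAt ℝ (fun z => G z i j) c) :
    wdPlus (fun z => F z * G z) c = wdPlus F c * G c + F c * wdPlus G c := by
  ext i j
  rw [wdPlus_apply]
  have h1 : (fun z => (F z * G z) i j) = fun z => ∑ l, F z i l * G z l j := by
    funext z; exact Matrix.mul_apply
  rw [h1, wp_sum (fun l _ => (hF i l).fun_mul (hG l j))]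
  simp only [Matrix.add_apply, Matrix.mul_apply, wdPlus_apply]
  rw [← Finset.sum_add_distrib]
  refine Finset.sum_congr rfl fun l _ => ?_
  rw [wp_mul (hF i l) (hG l j)]

lemma wdPlus_wdMinus_comm {F : ℂ → Matrix (Fin N) (Fin K) ℂ}
    (hF : ∀ i j, ContDiffAt ℝ 2 (fun z => F z i j) c) :
    wdPlus (fun z => wdMinus F z) c = wdMinus (fun z => wdPlus F z) c := by
  ext i j
  rw [wdPlus_apply, wdMinus_apply]
  simp only [wdMinus_apply, wdPlus_apply]
  exact wp_wm_comm (hF i j)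

lemma diffAt_entry_mul {F : ℂ → Matrix (Fin N) (Fin M) ℂ} {G : ℂ → Matrix (Fin M) (Fin K) ℂ}
    (hF : ∀ i j, DifferentiableAt ℝ (fun z => F z i j) c)
    (hG : ∀ i j, DifferentiableAt ℝ (fun z => G z i j) c) :
    ∀ i j, DifferentiableAt ℝ (fun z => (F z * G z) i j) c := by
  intro i j
  have h1 : (fun z => (F z * G z) i j) = fun z => ∑ l, F z i l * G z l j := by
    funext z; exact Matrix.mul_apply
  rw [h1]
  exact DifferentiableAt.fun_sum fun l _ => (hF i l).fun_mul (hG l j)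

lemma diffAt_prod {ι : Type*} {s : Finset ι} {f : ι → ℂ → ℂ}
    (h : ∀ i ∈ s, DifferentiableAt ℝ (f i) c) :
    DifferentiableAt ℝ (fun z => ∏ i ∈ s, f i z) c := by
  classical
  induction s using Finset.induction_on with
  | empty => simpa using differentiableAt_const (1 : ℂ)
  | insert a s2 hni ih =>
    have h1 : (fun z => ∏ i ∈ insert a s2, f i z) = fun z => f a z * ∏ i ∈ s2, f i z := by
      funext z; rw [Finset.prod_insert hni]
    rw [h1]
    exact (h a (Finset.mem_insert_self a s2)).mul
      (ih fun i hi => h i (Finset.mem_insert_of_mem hi))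

lemma diffAt_det {m : ℕ} {M : ℂ → Matrix (Fin m) (Fin m) ℂ}
    (h : ∀ i j, DifferentiableAt ℝ (fun z => M z i j) c) :
    DifferentiableAt ℝ (fun z => (M z).det) c := by
  have h1 : (fun z => (M z).det)
      = fun z => ∑ σ : Equiv.Perm (Fin m), (Equiv.Perm.sign σ : ℂ) * ∏ i, M z (σ i) i := by
    funext z
    rw [Matrix.det_apply]
    refine Finset.sum_congr rfl fun σ _ => ?_
    simp [Units.smul_def, zsmul_eq_mul]
  rw [h1]
  refine DifferentiableAt.fun_sum fun σ _ => ?_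
  exact (differentiableAt_const _).fun_mul (diffAt_prod fun i _ => h (σ i) i)

lemma diffAt_inv_entry {m : ℕ} {M : ℂ → Matrix (Fin m) (Fin m) ℂ}
    (h : ∀ i j, DifferentiableAt ℝ (fun z => M z i j) c) (hdet : (M c).det ≠ 0) :
    ∀ i j, DifferentiableAt ℝ (fun z => (M z)⁻¹ i j) c := by
  intro i j
  have hadj : DifferentiableAt ℝ (fun z => (M z).adjugate i j) c := by
    have h2 : (fun z => (M z).adjugate i j)
        = fun z => ((M z).updateRow j (Pi.single i 1)).det := by
      funext z; rw [Matrix.adjugate_apply]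
    rw [h2]
    refine diffAt_det fun a b => ?_
    simp only [Matrix.updateRow_apply]
    by_cases hab : a = j
    · simp [hab]
    · simpa [hab] using h a b
  have h3 : (fun z => (M z)⁻¹ i j) = fun z => ((M z).det)⁻¹ * (M z).adjugate i j := by
    funext z
    rw [Matrix.inv_def, Matrix.smul_apply, Ring.inverse_eq_inv, smul_eq_mul]
  rw [h3]
  have hinv : DifferentiableAt ℝ (fun z => ((M z).det)⁻¹) c := by
    have := (differentiableAt_inv hdet).restrictScalars ℝ (𝕜' := ℂ)
    exact this.comp c (diffAt_det h)
  exact hinv.mul hadj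

lemma diffAt_wm {f : ℂ → ℂ} (hU : IsOpen U) (hc : c ∈ U)
    (hf : ContDiffOn ℝ (⊤ : ℕ∞) f U) : DifferentiableAt ℝ (fun z => wm f z) c := by
  have h1 : ContDiffOn ℝ ((⊤ : ℕ∞) : WithTop ℕ∞) (fun z => fderiv ℝ f z) U :=
    ((contDiffOn_infty_iff_fderiv_of_isOpen hU).mp hf).2
  have h2 : DifferentiableAt ℝ (fderiv ℝ f) c :=
    (h1.contDiffAt (hU.mem_nhds hc)).differentiableAt
      (by simp)
  have h3 : ∀ v : ℂ, DifferentiableAt ℝ (fun z => fderiv ℝ f z v) c :=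
    fun v => h2.clm_apply (differentiableAt_const v)
  simp only [wm]
  exact (((h3 1).sub ((h3 Complex.I).const_mul Complex.I)).const_mul _)

end MatrixLayer

lemma toda_core {n kp kc kn : ℕ} {U : Set ℂ} (hU : IsOpen U) {c : ℂ} (hc : c ∈ U)
    (φp : ℂ → Matrix (Fin n) (Fin kp) ℂ) (φc : ℂ → Matrix (Fin n) (Fin kc) ℂ)
    (φn : ℂ → Matrix (Fin n) (Fin kn) ℂ)
    (βc : ℂ → Matrix (Fin kc) (Fin kc) ℂ)
    (Bnc : ℂ → Matrix (Fin kn) (Fin kc) ℂ)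
    (Gp : ℂ → Matrix (Fin kp) (Fin kc) ℂ)
    (Ap : Matrix (Fin kp) (Fin kp) ℂ) (Cp : Matrix (Fin kc) (Fin kp) ℂ)
    (Mn : Matrix (Fin kc) (Fin kn) ℂ)
    (hφc2 : ∀ i j, ContDiffAt ℝ 2 (fun z => φc z i j) c)
    (hφpd : ∀ i j, DifferentiableAt ℝ (fun z => φp z i j) c)
    (hφcd : ∀ i j, DifferentiableAt ℝ (fun z => φc z i j) c)
    (hφnd : ∀ i j, DifferentiableAt ℝ (fun z => φn z i j) c)
    (hLd : ∀ i j, DifferentiableAt ℝ (fun z => ((βc z)⁻¹ * wdMinus βc z) i j) c)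
    (hBd : ∀ i j, DifferentiableAt ℝ (fun z => Bnc z i j) c)
    (hGd : ∀ i j, DifferentiableAt ℝ (fun z => Gp z i j) c)
    (hm : ∀ z ∈ U, wdMinus φc z = φc z * ((βc z)⁻¹ * wdMinus βc z) + φn z * Bnc z)
    (hp : ∀ z ∈ U, wdPlus φc z = φp z * Gp z)
    (hpn : wdPlus φn c = φc c * Mn)
    (hBp : wdPlus Bnc c = 0)
    (hmp : wdMinus φp c = φp c * Ap + φc c * Cp)
    (hind : ∀ (Mp : Matrix (Fin kp) (Fin kc) ℂ) (Mc : Matrix (Fin kc) (Fin kc) ℂ),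
      φp c * Mp + φc c * Mc = 0 → Mc = 0) :
    wdPlus (fun z => (βc z)⁻¹ * wdMinus βc z) c = Cp * Gp c - Mn * Bnc c := by
  have schwarz : wdPlus (fun z => wdMinus φc z) c = wdMinus (fun z => wdPlus φc z) c :=
    wdPlus_wdMinus_comm hφc2
  have e1 : wdPlus (fun z => wdMinus φc z) c
      = wdPlus (fun z => φc z * ((βc z)⁻¹ * wdMinus βc z) + φn z * Bnc z) c :=
    wdPlus_congr hU hc hm
  have e2 : wdMinus (fun z => wdPlus φc z) c = wdMinus (fun z => φp z * Gp z) c :=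
    wdMinus_congr hU hc hp
  have expand1 : wdPlus (fun z => φc z * ((βc z)⁻¹ * wdMinus βc z) + φn z * Bnc z) c
      = (φp c * Gp c) * ((βc c)⁻¹ * wdMinus βc c)
        + φc c * wdPlus (fun z => (βc z)⁻¹ * wdMinus βc z) c + (φc c * Mn) * Bnc c := by
    rw [wdPlus_add (diffAt_entry_mul hφcd hLd) (diffAt_entry_mul hφnd hBd),
      wdPlus_mul hφcd hLd, wdPlus_mul hφnd hBd, hp c hc, hpn, hBp, Matrix.mul_zero, add_zero,
      Matrix.mul_assoc (φp c)]
  have expand2 : wdMinus (fun z => φp z * Gp z) c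
      = (φp c * Ap + φc c * Cp) * Gp c + φp c * wdMinus Gp c := by
    rw [wdMinus_mul hφpd hGd, hmp]
  have h12 : (φp c * Gp c) * ((βc c)⁻¹ * wdMinus βc c)
        + φc c * wdPlus (fun z => (βc z)⁻¹ * wdMinus βc z) c + (φc c * Mn) * Bnc c
      = (φp c * Ap + φc c * Cp) * Gp c + φp c * wdMinus Gp c := by
    rw [← expand1, ← expand2, ← e1, schwarz, e2]
  have main : φp c * (Gp c * ((βc c)⁻¹ * wdMinus βc c) - Ap * Gp c - wdMinus Gp c)
      + φc c * (wdPlus (fun z => (βc z)⁻¹ * wdMinus βc z) c + Mn * Bnc c - Cp * Gp c) = 0 := by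
    have hz := sub_eq_zero.mpr h12
    rw [← hz]
    simp only [Matrix.mul_sub, Matrix.mul_add, Matrix.add_mul, Matrix.mul_assoc]
    abel
  have h := hind _ _ main
  have h2 : wdPlus (fun z => (βc z)⁻¹ * wdMinus βc z) c - (Cp * Gp c - Mn * Bnc c) = 0 := by
    rw [← h]; abel
  exact sub_eq_zero.mp h2

lemma indep_blocks {n t : ℕ} {k : ℕ → ℕ} {c : ℂ}
    {φ : (a : ℕ) → ℂ → Matrix (Fin n) (Fin (k a)) ℂ}
    (hφinv : LinearIndependent ℂ
      (fun p : Σ a : Fin (t + 1), Fin (k a.1) => (fun i => φ p.1.1 c i p.2 : Fin n → ℂ)))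
    {K : ℕ} (M : ∀ s : Fin (t+1), Matrix (Fin (k s.1)) (Fin K) ℂ)
    (hsum : ∑ s : Fin (t+1), φ s.1 c * M s = 0) : ∀ s, M s = 0 := by
  intro s0
  ext l j
  have hli := Fintype.linearIndependent_iff.mp hφinv
  refine hli (fun sl => M sl.1 sl.2 j) ?_ ⟨s0, l⟩
  funext i
  have h0 : ∑ s : Fin (t+1), ∑ l2, φ s.1 c i l2 * M s l2 j = 0 := by
    have h1 := congrFun (congrFun hsum i) j
    simpa [Matrix.sum_apply, Matrix.mul_apply] using h1
  simp only [Finset.sum_apply, Pi.smul_apply, smul_eq_mul, Pi.zero_apply]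
  rw [← Finset.univ_sigma_univ, Finset.sum_sigma]
  simpa [mul_comm] using h0

/-- Extension of a single block to a family indexed by `Fin (t+1)`. -/
def blockExt {t K : ℕ} (k : ℕ → ℕ) {q : ℕ} (_hq : q < t + 1)
    (Mq : Matrix (Fin (k q)) (Fin K) ℂ) (s : Fin (t + 1)) :
    Matrix (Fin (k s.1)) (Fin K) ℂ :=
  if h2 : (s : ℕ) = q then Mq.submatrix (Fin.cast (congrArg k h2)) id else 0

lemma blockExt_self {t K : ℕ} (k : ℕ → ℕ) {q : ℕ} (hq : q < t + 1)
    (Mq : Matrix (Fin (k q)) (Fin K) ℂ) :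
    blockExt k hq Mq ⟨q, hq⟩ = Mq := by
  unfold blockExt
  split
  · rename_i h2
    ext l j
    rw [Matrix.submatrix_apply]
    congr 1
  · rename_i h2
    exact absurd rfl h2

lemma blockExt_ne {t K : ℕ} (k : ℕ → ℕ) {q : ℕ} (hq : q < t + 1)
    (Mq : Matrix (Fin (k q)) (Fin K) ℂ) {s : Fin (t + 1)} (h : (s : ℕ) ≠ q) :
    blockExt k hq Mq s = 0 := by
  unfold blockExt
  rw [dif_neg h]

lemma blockExt_sum {n t K : ℕ} {k : ℕ → ℕ} (A : ∀ s : Fin (t+1), Matrix (Fin n) (Fin (k s.1)) ℂ)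
    {q : ℕ} (hq : q < t + 1) (Mq : Matrix (Fin (k q)) (Fin K) ℂ) :
    ∑ s : Fin (t+1), A s * blockExt k hq Mq s = A ⟨q, hq⟩ * Mq := by
  rw [Finset.sum_eq_single (⟨q, hq⟩ : Fin (t+1))]
  · rw [blockExt_self]
  · intro s _ hne
    rw [blockExt_ne k hq Mq (fun hv => hne (Fin.ext hv)), Matrix.mul_zero]
  · intro hmem; exact absurd (Finset.mem_univ _) hmem

lemma indep_single {n t : ℕ} {k : ℕ → ℕ} {c : ℂ}
    {φ : (a : ℕ) → ℂ → Matrix (Fin n) (Fin (k a)) ℂ}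
    (hφinv : LinearIndependent ℂ
      (fun p : Σ a : Fin (t + 1), Fin (k a.1) => (fun i => φ p.1.1 c i p.2 : Fin n → ℂ)))
    {q : ℕ} (hq : q ≤ t) {K : ℕ}
    (Mq : Matrix (Fin (k q)) (Fin K) ℂ)
    (h : φ q c * Mq = 0) : Mq = 0 := by
  have hq1 : q < t + 1 := Nat.lt_succ_of_le hq
  have key := indep_blocks hφinv (blockExt k hq1 Mq) ?_ ⟨q, hq1⟩
  · rw [blockExt_self] at key
    exact key
  · rw [blockExt_sum (fun s => φ s.1 c) hq1 Mq]
    exact h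

lemma indep_pair {n t : ℕ} {k : ℕ → ℕ} {c : ℂ}
    {φ : (a : ℕ) → ℂ → Matrix (Fin n) (Fin (k a)) ℂ}
    (hφinv : LinearIndependent ℂ
      (fun p : Σ a : Fin (t + 1), Fin (k a.1) => (fun i => φ p.1.1 c i p.2 : Fin n → ℂ)))
    {p q : ℕ} (hp : p ≤ t) (hq : q ≤ t) (hpq : p ≠ q) {K : ℕ}
    (Mp : Matrix (Fin (k p)) (Fin K) ℂ) (Mq : Matrix (Fin (k q)) (Fin K) ℂ)
    (h : φ p c * Mp + φ q c * Mq = 0) : Mq = 0 := by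
  have hp1 : p < t + 1 := Nat.lt_succ_of_le hp
  have hq1 : q < t + 1 := Nat.lt_succ_of_le hq
  have key := indep_blocks hφinv (fun s => blockExt k hp1 Mp s + blockExt k hq1 Mq s)
    ?_ ⟨q, hq1⟩
  · rw [blockExt_self, blockExt_ne k hp1 Mp (fun h2 => hpq h2.symm), zero_add] at key
    exact key
  · have hsplit : ∑ s : Fin (t+1), φ s.1 c * (blockExt k hp1 Mp s + blockExt k hq1 Mq s)
        = (∑ s : Fin (t+1), φ s.1 c * blockExt k hp1 Mp s)
          + ∑ s : Fin (t+1), φ s.1 c * blockExt k hq1 Mq s := by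
      rw [← Finset.sum_add_distrib]
      refine Finset.sum_congr rfl fun s _ => ?_
      rw [Matrix.mul_add]
    rw [hsplit, blockExt_sum (fun s => φ s.1 c) hp1 Mp, blockExt_sum (fun s => φ s.1 c) hq1 Mq]
    exact h

/-- a family of blocks `φ a` forming a pointwise invertible `n × n`
matrix `(φ 0 ⋯ φ t)` and satisfying the Frenet frame equations
`∂₋ φ a = φ a (β a)⁻¹ ∂₋ β a + φ (a+1) B (a+1) a` and
`∂₊ φ a = φ (a-1) (β (a-1))⁻¹ D (a-1) a β a` (with `D (a-1) a = -(B a (a-1))ᴴ`,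
`B (t+1) t ≡ 0`, `D (-1) 0 ≡ 0`) forces the nonabelian Toda equations
`∂₊((β a)⁻¹ ∂₋ β a) = (β a)⁻¹ (B (a+1) a)ᴴ β (a+1) B (a+1) a
  - B a (a-1) (β (a-1))⁻¹ (B a (a-1))ᴴ β a` for all `a = 0, …, t`
(terms with index `-1` or `t+1` being zero). -/
theorem frenet_implies_toda {n t : ℕ}
    (U : Set ℂ) (hU : IsOpen U) (hne : U.Nonempty)
    (k : ℕ → ℕ) (hk : ∀ a, a ≤ t → 0 < k a)
    (hsum : ∑ a ∈ Finset.range (t + 1), k a = n)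
    (φ : (a : ℕ) → ℂ → Matrix (Fin n) (Fin (k a)) ℂ)
    (hφC2 : ∀ a, a ≤ t → ∀ i j, ContDiffOn ℝ 2 (fun z => φ a z i j) U)
    (hφinv : ∀ c ∈ U, LinearIndependent ℂ
      (fun p : Σ a : Fin (t + 1), Fin (k a.1) => (fun i => φ p.1.1 c i p.2 : Fin n → ℂ)))
    (β : (a : ℕ) → ℂ → Matrix (Fin (k a)) (Fin (k a)) ℂ)
    (hβs : ∀ a, a ≤ t → ∀ i j, ContDiffOn ℝ (⊤ : ℕ∞) (fun z => β a z i j) U)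
    (hβinv : ∀ a, a ≤ t → ∀ c ∈ U, IsUnit (β a c))
    (B : (b : ℕ) → (a : ℕ) → ℂ → Matrix (Fin (k b)) (Fin (k a)) ℂ)
    (hBhol : ∀ a, a < t → ∀ i j, DifferentiableOn ℂ (fun z => B (a + 1) a z i j) U)
    (hBtop : ∀ c : ℂ, B (t + 1) t c = 0)
    (hminus : ∀ a, a ≤ t → ∀ c ∈ U,
      wdMinus (φ a) c = φ a c * (β a c)⁻¹ * wdMinus (β a) c + φ (a + 1) c * B (a + 1) a c)
    (hplus0 : ∀ c ∈ U, wdPlus (φ 0) c = 0)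
    (hplus : ∀ a, a < t → ∀ c ∈ U,
      wdPlus (φ (a + 1)) c = φ a c * (β a c)⁻¹ * (-(B (a + 1) a c)ᴴ) * β (a + 1) c) :
    (∀ c ∈ U,
      wdPlus (fun z => (β 0 z)⁻¹ * wdMinus (β 0) z) c
        = (β 0 c)⁻¹ * (B 1 0 c)ᴴ * β 1 c * B 1 0 c) ∧
    (∀ a, a < t → ∀ c ∈ U,
      wdPlus (fun z => (β (a + 1) z)⁻¹ * wdMinus (β (a + 1)) z) c
        = (β (a + 1) c)⁻¹ * (B (a + 2) (a + 1) c)ᴴ * β (a + 2) c * B (a + 2) (a + 1) c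
          - B (a + 1) a c * (β a c)⁻¹ * (B (a + 1) a c)ᴴ * β (a + 1) c) := by
  classical
  constructor
  · -- the a = 0 Toda equation
    intro c hc
    have hmc : U ∈ nhds c := hU.mem_nhds hc
    have hφinv' := hφinv c hc
    have dβ : ∀ i j, DifferentiableAt ℝ (fun z => β 0 z i j) c :=
      fun i j => ((hβs 0 (Nat.zero_le t) i j).contDiffAt hmc).differentiableAt
        (by simp)
    have ddet : (β 0 c).det ≠ 0 :=
      ((Matrix.isUnit_iff_isUnit_det _).mp (hβinv 0 (Nat.zero_le t) c hc)).ne_zero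
    have dβinv := diffAt_inv_entry dβ ddet
    have dwβ : ∀ i j, DifferentiableAt ℝ (fun z => wdMinus (β 0) z i j) c :=
      fun i j => diffAt_wm hU hc (hβs 0 (Nat.zero_le t) i j)
    have dL := diffAt_entry_mul dβinv dwβ
    have cφ2 : ∀ i j, ContDiffAt ℝ 2 (fun z => φ 0 z i j) c :=
      fun i j => (hφC2 0 (Nat.zero_le t) i j).contDiffAt hmc
    have dφ0 : ∀ i j, DifferentiableAt ℝ (fun z => φ 0 z i j) c :=
      fun i j => (cφ2 i j).differentiableAt two_ne_zero
    rcases Nat.eq_zero_or_pos t with ht0 | htpos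
    · -- t = 0 : the equation degenerates
      subst ht0
      have hcore := toda_core hU hc (fun _ => (0 : Matrix (Fin n) (Fin 0) ℂ)) (φ 0)
        (fun _ => (0 : Matrix (Fin n) (Fin 0) ℂ)) (β 0)
        (fun _ => (0 : Matrix (Fin 0) (Fin (k 0)) ℂ))
        (fun _ => (0 : Matrix (Fin 0) (Fin (k 0)) ℂ))
        (0 : Matrix (Fin 0) (Fin 0) ℂ) (0 : Matrix (Fin (k 0)) (Fin 0) ℂ)
        (0 : Matrix (Fin (k 0)) (Fin 0) ℂ)
        cφ2 (fun i j => differentiableAt_const _) dφ0 (fun i j => differentiableAt_const _)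
        dL (fun i j => differentiableAt_const _) (fun i j => differentiableAt_const _)
        (fun z hz => by
          rw [hminus 0 (Nat.zero_le 0) z hz, (hBtop z : B 1 0 z = 0), Matrix.mul_zero,
            Matrix.mul_assoc]
          simp)
        (fun z hz => by rw [hplus0 z hz]; simp)
        (by rw [wdPlus_zero]; simp)
        wdPlus_zero
        (by rw [wdMinus_zero]; simp)
        (fun Mp Mc hh => indep_single hφinv' (Nat.zero_le 0) Mc (by simpa using hh))
      rw [(hBtop c : B 1 0 c = 0), hcore]
      simp
    · -- t > 0
      have dφ1 : ∀ i j, DifferentiableAt ℝ (fun z => φ 1 z i j) c :=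
        fun i j => ((hφC2 1 htpos i j).contDiffAt hmc).differentiableAt two_ne_zero
      have dB : ∀ i j, DifferentiableAt ℝ (fun z => B 1 0 z i j) c :=
        fun i j => ((hBhol 0 htpos i j).differentiableAt hmc).restrictScalars ℝ
      have hBp : wdPlus (B 1 0) c = 0 := by
        ext i j
        rw [wdPlus_apply]
        exact wp_holo ((hBhol 0 htpos i j).differentiableAt hmc)
      have hcore := toda_core hU hc (fun _ => (0 : Matrix (Fin n) (Fin 0) ℂ)) (φ 0) (φ 1)
        (β 0) (B 1 0) (fun _ => (0 : Matrix (Fin 0) (Fin (k 0)) ℂ))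
        (0 : Matrix (Fin 0) (Fin 0) ℂ) (0 : Matrix (Fin (k 0)) (Fin 0) ℂ)
        ((β 0 c)⁻¹ * (-(B 1 0 c)ᴴ) * β 1 c)
        cφ2 (fun i j => differentiableAt_const _) dφ0 dφ1 dL dB
        (fun i j => differentiableAt_const _)
        (fun z hz => by rw [hminus 0 (Nat.zero_le t) z hz, Matrix.mul_assoc])
        (fun z hz => by rw [hplus0 z hz]; simp)
        (by rw [hplus 0 htpos c hc]; simp [Matrix.mul_assoc])
        hBp
        (by rw [wdMinus_zero]; simp)
        (fun Mp Mc hh => indep_single hφinv' (Nat.zero_le t) Mc (by simpa using hh))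
      rw [hcore]
      simp [Matrix.mul_neg, Matrix.neg_mul, Matrix.mul_assoc]
  · -- the a + 1 Toda equations
    intro a ha c hc
    have ha' : a + 1 ≤ t := ha
    have haa : a ≤ t := Nat.le_of_lt ha
    have hmc : U ∈ nhds c := hU.mem_nhds hc
    have hφinv' := hφinv c hc
    have dβ : ∀ b, b ≤ t → ∀ i j, DifferentiableAt ℝ (fun z => β b z i j) c :=
      fun b hb i j => ((hβs b hb i j).contDiffAt hmc).differentiableAt
        (by simp)
    have ddet : ∀ b, b ≤ t → (β b c).det ≠ 0 := fun b hb =>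
      ((Matrix.isUnit_iff_isUnit_det _).mp (hβinv b hb c hc)).ne_zero
    have dβinv : ∀ b, b ≤ t → ∀ i j, DifferentiableAt ℝ (fun z => (β b z)⁻¹ i j) c :=
      fun b hb => diffAt_inv_entry (dβ b hb) (ddet b hb)
    have dwβ : ∀ b, b ≤ t → ∀ i j, DifferentiableAt ℝ (fun z => wdMinus (β b) z i j) c :=
      fun b hb i j => diffAt_wm hU hc (hβs b hb i j)
    have dL := diffAt_entry_mul (dβinv (a+1) ha') (dwβ (a+1) ha')
    have cφ2 : ∀ i j, ContDiffAt ℝ 2 (fun z => φ (a+1) z i j) c :=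
      fun i j => (hφC2 (a+1) ha' i j).contDiffAt hmc
    have dφ1 : ∀ i j, DifferentiableAt ℝ (fun z => φ (a+1) z i j) c :=
      fun i j => (cφ2 i j).differentiableAt two_ne_zero
    have dφa : ∀ i j, DifferentiableAt ℝ (fun z => φ a z i j) c :=
      fun i j => ((hφC2 a haa i j).contDiffAt hmc).differentiableAt two_ne_zero
    have dBa : ∀ i j, DifferentiableAt ℝ (fun z => B (a+1) a z i j) c :=
      fun i j => ((hBhol a ha i j).differentiableAt hmc).restrictScalars ℝ
    have dnegBH : ∀ i j, DifferentiableAt ℝ (fun z => (-(B (a+1) a z)ᴴ) i j) c := by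
      intro i j
      have h1 : (fun z => (-(B (a+1) a z)ᴴ) i j) = fun z => -(star (B (a+1) a z j i)) := by
        funext z; simp [Matrix.conjTranspose_apply]
      rw [h1]
      exact ((dBa j i).star).neg
    have dG : ∀ i j, DifferentiableAt ℝ
        (fun z => ((β a z)⁻¹ * (-(B (a+1) a z)ᴴ) * β (a+1) z) i j) c :=
      diffAt_entry_mul (diffAt_entry_mul (dβinv a haa) dnegBH) (dβ (a+1) ha')
    have hmp : wdMinus (φ a) c
        = φ a c * ((β a c)⁻¹ * wdMinus (β a) c) + φ (a+1) c * B (a+1) a c := by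
      rw [hminus a haa c hc, Matrix.mul_assoc]
    have hpG : ∀ z ∈ U, wdPlus (φ (a+1)) z
        = φ a z * ((β a z)⁻¹ * (-(B (a+1) a z)ᴴ) * β (a+1) z) := by
      intro z hz
      rw [hplus a ha z hz]
      simp [Matrix.mul_assoc]
    have hindp : ∀ (Mp : Matrix (Fin (k a)) (Fin (k (a+1))) ℂ)
        (Mc : Matrix (Fin (k (a+1))) (Fin (k (a+1))) ℂ),
        φ a c * Mp + φ (a+1) c * Mc = 0 → Mc = 0 :=
      fun Mp Mc hh => indep_pair hφinv' haa ha' (by omega) Mp Mc hh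
    rcases Nat.lt_or_ge (a+1) t with hlt | hge
    · -- a + 1 < t
      have ha2 : a + 2 ≤ t := hlt
      have dφ2 : ∀ i j, DifferentiableAt ℝ (fun z => φ (a+2) z i j) c :=
        fun i j => ((hφC2 (a+2) ha2 i j).contDiffAt hmc).differentiableAt two_ne_zero
      have dB2 : ∀ i j, DifferentiableAt ℝ (fun z => B (a+2) (a+1) z i j) c :=
        fun i j => ((hBhol (a+1) hlt i j).differentiableAt hmc).restrictScalars ℝ
      have hBp2 : wdPlus (B (a+2) (a+1)) c = 0 := by
        ext i j
        rw [wdPlus_apply]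
        exact wp_holo ((hBhol (a+1) hlt i j).differentiableAt hmc)
      have hcore := toda_core hU hc (φ a) (φ (a+1)) (φ (a+2)) (β (a+1)) (B (a+2) (a+1))
        (fun z => (β a z)⁻¹ * (-(B (a+1) a z)ᴴ) * β (a+1) z)
        ((β a c)⁻¹ * wdMinus (β a) c) (B (a+1) a c)
        ((β (a+1) c)⁻¹ * (-(B (a+2) (a+1) c)ᴴ) * β (a+2) c)
        cφ2 dφa dφ1 dφ2 dL dB2 dG
        (fun z hz => by rw [hminus (a+1) ha' z hz, Matrix.mul_assoc])
        hpG
        (by rw [hplus (a+1) hlt c hc]; simp [Matrix.mul_assoc])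
        hBp2
        hmp
        hindp
      rw [hcore]
      simp only [Matrix.mul_neg, Matrix.neg_mul, neg_neg, sub_neg_eq_add, Matrix.mul_assoc]
      abel
    · -- a + 1 = t
      have heq : a + 1 = t := Nat.le_antisymm ha hge
      subst heq
      have hcore := toda_core hU hc (φ a) (φ (a+1)) (fun _ => (0 : Matrix (Fin n) (Fin 0) ℂ))
        (β (a+1)) (fun _ => (0 : Matrix (Fin 0) (Fin (k (a+1))) ℂ))
        (fun z => (β a z)⁻¹ * (-(B (a+1) a z)ᴴ) * β (a+1) z)
        ((β a c)⁻¹ * wdMinus (β a) c) (B (a+1) a c)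
        (0 : Matrix (Fin (k (a+1))) (Fin 0) ℂ)
        cφ2 dφa dφ1 (fun i j => differentiableAt_const _) dL
        (fun i j => differentiableAt_const _) dG
        (fun z hz => by
          rw [hminus (a+1) le_rfl z hz, hBtop z, Matrix.mul_zero, Matrix.mul_assoc]
          simp)
        hpG
        (by rw [wdPlus_zero]; simp)
        wdPlus_zero
        hmp
        hindp
      rw [(hBtop c : B (a+2) (a+1) c = 0), hcore]
      simp [Matrix.mul_neg, Matrix.neg_mul, Matrix.mul_assoc]
end
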